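/- For every finite connected simple graph G with n vertices and at least one edge, there exists a finite connected simple graph G' with τ(G') = n + τ(G) and τ_c(G') = 2n. (One such G' is obtained from G by attaching, to each vertex v of G, a new path v–v'–v'' of two new vertices.) -/

import Mathlib

open SimpleGraph

/-- `C` is a vertex cover of `G`: every edge of `G` has an endpoint in `C`. -/
def IsVertexCover {V : Type} (G : SimpleGraph V) (C : Set V) : Prop :=
  ∀ ⦃u v : V⦄, G.Adj u v → u ∈ C ∨ v ∈ C

/-- `C` is a connected vertex cover of `G`: a vertex cover inducing a connected subgraph. -/
def IsConnectedVertexCover {V : Type} (G : SimpleGraph V) (C : Set V) : Prop :=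
  _root_.IsVertexCover G C ∧ (G.induce C).Connected

/-- The vertex cover number `τ(G)`. -/
noncomputable def tau {V : Type} (G : SimpleGraph V) : ℕ :=
  sInf {n | ∃ C : Set V, _root_.IsVertexCover G C ∧ C.ncard = n}

/-- The connected vertex cover number `τ_c(G)`. -/
noncomputable def tauc {V : Type} (G : SimpleGraph V) : ℕ :=
  sInf {n | ∃ C : Set V, IsConnectedVertexCover G C ∧ C.ncard = n}

/-!
Attach a pendant path of length two at every vertex of `G`. Every vertex cover of the new graph
contains a non-base vertex of each pendant path, and its trace on the base is a vertex cover of `G`;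
all middle vertices plus a minimum cover of `G` achieve this, so `τ(G') = n + τ(G)`.
A connected vertex cover `C` must contain each middle vertex `(v, 1)`, since otherwise the leaf
`(v, 2)` is isolated in `C`; and then each base vertex `v`, since otherwise the pendant path at `v`
is closed under the edges of `C`. Either way `C` could not reach the pendant path of a second vertex
of `G`. So `C` contains the `2n` base and middle vertices, which already form a connected cover.
-/

section VertexCoverNumbers

variable {V : Type} {G : SimpleGraph V}

lemma tau_le {C : Set V} (hC : _root_.IsVertexCover G C) : tau G ≤ C.ncard :=
  Nat.sInf_le ⟨C, hC, rfl⟩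

lemma exists_isVertexCover_ncard_eq_tau (G : SimpleGraph V) :
    ∃ C, _root_.IsVertexCover G C ∧ C.ncard = tau G :=
  Nat.sInf_mem (s := {n | ∃ C : Set V, _root_.IsVertexCover G C ∧ C.ncard = n})
    ⟨_, Set.univ, fun _ _ _ => Or.inl trivial, rfl⟩

lemma tau_eq_of_isVertexCover {C : Set V} {k : ℕ} (hC : _root_.IsVertexCover G C)
    (hk : C.ncard = k) (hmin : ∀ C', _root_.IsVertexCover G C' → k ≤ C'.ncard) : tau G = k :=
  IsLeast.csInf_eq ⟨⟨C, hC, hk⟩, by rintro _ ⟨C', hC', rfl⟩; exact hmin C' hC'⟩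

lemma tauc_eq_of_isConnectedVertexCover {C : Set V} {k : ℕ} (hC : IsConnectedVertexCover G C)
    (hk : C.ncard = k) (hmin : ∀ C', IsConnectedVertexCover G C' → k ≤ C'.ncard) : tauc G = k :=
  IsLeast.csInf_eq ⟨⟨C, hC, hk⟩, by rintro _ ⟨C', hC', rfl⟩; exact hmin C' hC'⟩

end VertexCoverNumbers

lemma SimpleGraph.Connected.of_hom_of_reachable {V W : Type*} {G : SimpleGraph V}
    {H : SimpleGraph W} (hG : G.Connected) (f : G →g H) (hf : ∀ w, ∃ v, H.Reachable w (f v)) :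
    H.Connected := by
  refine (connected_iff H).mpr ⟨fun a b => ?_, hG.nonempty.map f⟩
  obtain ⟨u, hu⟩ := hf a
  obtain ⟨v, hv⟩ := hf b
  exact hu.trans (((hG.preconnected u v).map f).trans hv.symm)

lemma subset_of_induce_connected {W : Type*} {H : SimpleGraph W} {C S : Set W}
    (hC : (H.induce C).Connected) (hS : ∀ ⦃a b⦄, a ∈ C → b ∈ C → a ∈ S → H.Adj a b → b ∈ S)
    {a : W} (haC : a ∈ C) (haS : a ∈ S) : C ⊆ S := by
  intro b hbC
  by_contra hbS
  obtain ⟨d, -, hd, hd'⟩ :=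
    (hC.preconnected ⟨a, haC⟩ ⟨b, hbC⟩).some.exists_boundary_dart {x | x.1 ∈ S} haS hbS
  exact hd' (hS d.fst.2 d.snd.2 hd d.adj)

/-- `G` with a pendant path `v – (v, 1) – (v, 2)` attached at each vertex `v ≅ (v, 0)`. -/
def pendantPaths {V : Type} (G : SimpleGraph V) : SimpleGraph (V × Fin 3) where
  Adj a b := (a.2 = 0 ∧ b.2 = 0 ∧ G.Adj a.1 b.1) ∨ (a.1 = b.1 ∧ (pathGraph 3).Adj a.2 b.2)
  symm := ⟨fun _ _ h =>
    h.imp (fun ⟨ha, hb, h⟩ => ⟨hb, ha, h.symm⟩) fun ⟨h, h'⟩ => ⟨h.symm, h'.symm⟩⟩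
  loopless := ⟨fun _ h => h.elim (fun ⟨_, _, h⟩ => G.irrefl h) fun ⟨_, h⟩ => (pathGraph 3).irrefl h⟩

namespace PendantPaths

variable {V : Type} {G : SimpleGraph V}

lemma adj_zero_one (v : V) : (pendantPaths G).Adj (v, 0) (v, 1) :=
  Or.inr ⟨rfl, by simp [pathGraph_adj]⟩

lemma adj_one_two (v : V) : (pendantPaths G).Adj (v, 1) (v, 2) :=
  Or.inr ⟨rfl, by simp [pathGraph_adj]⟩

lemma adj_base_or_snd_eq_one {a b : V × Fin 3} (h : (pendantPaths G).Adj a b) :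
    (a.2 = 0 ∧ b.2 = 0 ∧ G.Adj a.1 b.1) ∨ a.2 = 1 ∨ b.2 = 1 := by
  rcases h with h | ⟨-, h⟩
  · exact .inl h
  · rw [pathGraph_adj] at h
    right
    omega

lemma eq_of_adj_two {v : V} {b : V × Fin 3} (h : (pendantPaths G).Adj (v, 2) b) : b = (v, 1) := by
  rcases h with ⟨h, -⟩ | ⟨rfl, h⟩
  · exact absurd h (by decide : (2 : Fin 3) ≠ 0)
  · rw [pathGraph_adj] at h
    ext
    · rfl
    · dsimp only at h ⊢
      omega

lemma fst_eq_of_adj {a b : V × Fin 3} (h : (pendantPaths G).Adj a b) (ha : a.2 ≠ 0) :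
    b.1 = a.1 :=
  h.elim (fun h => absurd h.1 ha) fun h => h.1.symm

lemma connected (hG : G.Connected) : (pendantPaths G).Connected := by
  refine hG.of_hom_of_reachable ⟨fun v => (v, 0), fun h => .inl ⟨rfl, rfl, h⟩⟩ fun ⟨v, i⟩ => ⟨v, ?_⟩
  fin_cases i
  · rfl
  · exact (adj_zero_one v).symm.reachable
  · exact (adj_one_two v).symm.reachable.trans (adj_zero_one v).symm.reachable

lemma isVertexCover {C : Set V} (hC : _root_.IsVertexCover G C) :
    _root_.IsVertexCover (pendantPaths G) (C ×ˢ {0} ∪ Set.univ ×ˢ {1}) := by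
  intro a b h
  rcases adj_base_or_snd_eq_one h with ⟨ha, hb, h⟩ | ha | hb
  · rcases hC h with h | h <;> simp [*]
  · simp [ha]
  · simp [hb]

lemma card_add_tau_le_ncard [Fintype V] {C : Set (V × Fin 3)}
    (hC : _root_.IsVertexCover (pendantPaths G) C) : Fintype.card V + tau G ≤ C.ncard := by
  set D := {v | (v, (0 : Fin 3)) ∈ C}
  have hD : _root_.IsVertexCover G D := fun _ _ h => hC (.inl ⟨rfl, rfl, h⟩)
  have hbase : C ∩ {p | p.2 = 0} = D ×ˢ {0} := by
    ext ⟨v, i⟩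
    constructor <;> rintro ⟨h, rfl : i = 0⟩ <;> exact ⟨h, rfl⟩
  have hpendant : Prod.fst '' (C \ {p | p.2 = 0}) = Set.univ := by
    refine Set.eq_univ_of_forall fun v => ?_
    rcases hC (adj_one_two v) with h | h
    exacts [⟨_, ⟨h, by simp⟩, rfl⟩, ⟨_, ⟨h, by simp⟩, rfl⟩]
  calc Fintype.card V + tau G ≤ (Prod.fst '' (C \ {p | p.2 = 0})).ncard + D.ncard := by
        rw [hpendant, Set.ncard_univ, Nat.card_eq_fintype_card]
        exact Nat.add_le_add_left (tau_le hD) _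
    _ ≤ (C \ {p | p.2 = 0}).ncard + (C ∩ {p | p.2 = 0}).ncard := by
        rw [hbase, Set.ncard_prod, Set.ncard_singleton, mul_one]
        exact Nat.add_le_add_right Set.ncard_image_le _
    _ = C.ncard := by rw [add_comm, Set.ncard_inter_add_ncard_sdiff_eq_ncard]

lemma tau_eq [Fintype V] (G : SimpleGraph V) :
    tau (pendantPaths G) = Fintype.card V + tau G := by
  obtain ⟨C, hC, hCcard⟩ := exists_isVertexCover_ncard_eq_tau G
  refine tau_eq_of_isVertexCover (isVertexCover hC) ?_ fun _ => card_add_tau_le_ncard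
  rw [Set.ncard_union_eq (Set.disjoint_prod.mpr (.inr (by simp))), Set.ncard_prod, Set.ncard_prod,
    Set.ncard_univ, Nat.card_eq_fintype_card, hCcard]
  simp only [Set.ncard_singleton]
  ring

lemma isConnectedVertexCover (hG : G.Connected) :
    IsConnectedVertexCover (pendantPaths G) (Set.univ ×ˢ {0, 1}) := by
  refine ⟨fun a b h => ?_, hG.of_hom_of_reachable
    ⟨fun v => ⟨(v, 0), by simp⟩, fun h => .inl ⟨rfl, rfl, h⟩⟩ fun ⟨⟨v, i⟩, hi⟩ => ⟨v, ?_⟩⟩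
  · rcases adj_base_or_snd_eq_one h with ⟨ha, -⟩ | ha | hb <;> simp [*]
  · obtain rfl | rfl : i = 0 ∨ i = 1 := by simpa using hi
    · rfl
    · exact Adj.reachable (G := (pendantPaths G).induce _) (adj_zero_one v).symm

lemma one_mem_of_isConnectedVertexCover [Nontrivial V] {C : Set (V × Fin 3)}
    (hC : IsConnectedVertexCover (pendantPaths G) C) (v : V) : (v, 1) ∈ C := by
  by_contra h1
  have h2 : (v, 2) ∈ C := (hC.1 (adj_one_two v)).resolve_left h1
  obtain ⟨w, hw⟩ := exists_ne v
  obtain ⟨i, hi⟩ : ∃ i, (w, i) ∈ C := (hC.1 (adj_one_two w)).elim (⟨1, ·⟩) (⟨2, ·⟩)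
  have hisolated : C ⊆ {(v, 2)} := by
    refine subset_of_induce_connected hC.2 (fun a b _ hb ha hab => ?_) h2 rfl
    rw [Set.mem_singleton_iff] at ha
    subst ha
    exact absurd (eq_of_adj_two hab ▸ hb) h1
  exact hw (congrArg Prod.fst (hisolated hi))

lemma zero_mem_of_isConnectedVertexCover [Nontrivial V] {C : Set (V × Fin 3)}
    (hC : IsConnectedVertexCover (pendantPaths G) C) (v : V) : (v, 0) ∈ C := by
  by_contra h0
  obtain ⟨w, hw⟩ := exists_ne v
  have hfiber : C ⊆ {p | p.1 = v} := by
    refine subset_of_induce_connected hC.2 (fun a b ha _ (haS : a.1 = v) hab => ?_)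
      (one_mem_of_isConnectedVertexCover hC v) rfl
    have ha0 : a.2 ≠ 0 := fun ha0 => h0 (haS ▸ ha0 ▸ ha)
    exact (fst_eq_of_adj hab ha0).trans haS
  exact hw (hfiber (one_mem_of_isConnectedVertexCover hC w))

lemma tauc_eq [Fintype V] [Nontrivial V] (hG : G.Connected) :
    tauc (pendantPaths G) = 2 * Fintype.card V := by
  have hcard : (Set.univ ×ˢ {0, 1} : Set (V × Fin 3)).ncard = 2 * Fintype.card V := by
    rw [Set.ncard_prod, Set.ncard_pair (by decide), Set.ncard_univ, Nat.card_eq_fintype_card,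
      mul_comm]
  refine tauc_eq_of_isConnectedVertexCover (isConnectedVertexCover hG) hcard fun C hC => ?_
  have hsub : Set.univ ×ˢ {0, 1} ⊆ C := by
    rintro ⟨v, i⟩ ⟨-, hi⟩
    obtain rfl | rfl : i = 0 ∨ i = 1 := by simpa using hi
    exacts [zero_mem_of_isConnectedVertexCover hC v, one_mem_of_isConnectedVertexCover hC v]
  exact hcard ▸ Set.ncard_le_ncard hsub

end PendantPaths

/-- For every finite connected graph `G` with `n` vertices and at least one edge,
there is a finite connected graph `G'` with `τ(G') = n + τ(G)` and `τ_c(G') = 2n`. -/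
theorem exists_fix_tauc {V : Type} [Fintype V] (G : SimpleGraph V)
    (hconn : G.Connected) (hedge : G.edgeSet.Nonempty) :
    ∃ (W : Type) (_ : Fintype W) (G' : SimpleGraph W),
      G'.Connected ∧ tau G' = Fintype.card V + tau G ∧
        tauc G' = 2 * Fintype.card V := by
  obtain ⟨u, w, huw⟩ := ne_bot_iff_exists_adj.mp (edgeSet_nonempty.mp hedge)
  have : Nontrivial V := huw.nontrivial
  exact ⟨V × Fin 3, inferInstance, pendantPaths G, PendantPaths.connected hconn,
    PendantPaths.tau_eq G, PendantPaths.tauc_eq hconn⟩
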